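/- Let F be a fusion system on a finite p-group S, and let H be a collection of subgroups of S that is closed under F-conjugation and under taking subgroups. Let X₀ be a virtual S-set with rational coefficients such that |X₀^P| = |X₀^{P'}| for all subgroups P, P' of S with P, P' ∉ H that are F-conjugate. Then there exists a virtual S-set X with rational coefficients such that: (a) |X^P| = |X^{P'}| for all subgroups P, P' of S that are F-conjugate; (b) |X^P| = |X₀^P| for all subgroups P of S with P ∉ H; and (c) X − X₀ is a virtual S-set with nonnegative rational coefficients. -/

import Mathlib

/-- The conjugation homomorphism `c_s : P → Q`, `u ↦ s u s⁻¹`,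
for subgroups `P, Q` of `S` with `s P s⁻¹ ≤ Q`. -/
def conjHom {S : Type} [Group S] (P Q : Subgroup S) (s : S)
    (h : ∀ p ∈ P, s * p * s⁻¹ ∈ Q) : ↥P →* ↥Q where
  toFun p := ⟨s * (p : S) * s⁻¹, h p p.2⟩
  map_one' := by ext; simp
  map_mul' a b := by ext; push_cast; group

/-- A fusion system on a group `S`: for each pair of subgroups `P, Q` of `S` a set
of injective group homomorphisms `P → Q`, containing all conjugation maps induced by
elements of `S`, closed under composition, and such that every morphism, corestricted
to an isomorphism onto its image, lies in the system together with its inverse. -/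
structure FusionSystem (S : Type) [Group S] where
  Hom : ∀ P Q : Subgroup S, Set (↥P →* ↥Q)
  inj : ∀ {P Q : Subgroup S} {φ : ↥P →* ↥Q}, φ ∈ Hom P Q → Function.Injective φ
  conj_mem : ∀ (P Q : Subgroup S) (s : S) (h : ∀ p ∈ P, s * p * s⁻¹ ∈ Q),
    conjHom P Q s h ∈ Hom P Q
  comp_mem : ∀ {P Q R : Subgroup S} {φ : ↥P →* ↥Q} {ψ : ↥Q →* ↥R},
    φ ∈ Hom P Q → ψ ∈ Hom Q R → ψ.comp φ ∈ Hom P R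
  restrict_mem : ∀ {P Q : Subgroup S} {φ : ↥P →* ↥Q}, φ ∈ Hom P Q →
    ∃ ψ ∈ Hom P (Subgroup.map Q.subtype φ.range),
      ∃ χ ∈ Hom (Subgroup.map Q.subtype φ.range) P,
        (∀ u : ↥P, ((ψ u : S)) = ((φ u : ↥Q) : S)) ∧
        (∀ u, χ (ψ u) = u) ∧ (∀ v, ψ (χ v) = v)

/-- Two subgroups are `F`-conjugate if there is an isomorphism between them in `F`. -/
def FConj {S : Type} [Group S] (F : FusionSystem S) (P P' : Subgroup S) : Prop :=
  ∃ φ ∈ F.Hom P P', Function.Bijective φ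

/-- An `S`-`S`-biset: a set with commuting left and right `S`-actions. -/
structure Biset (S : Type) [Group S] where
  X : Type
  l : S → X → X
  r : X → S → X
  l_one : ∀ x, l 1 x = x
  l_mul : ∀ s t x, l (s * t) x = l s (l t x)
  r_one : ∀ x, r x 1 = x
  r_mul : ∀ x s t, r x (s * t) = r (r x s) t
  lr_comm : ∀ s x t, l s (r x t) = r (l s x) t

/-- The relation on `S × S` generated by `(xq, y) ∼ (x, φ(q)y)` for `q ∈ Q`. -/
def amalgRel {S : Type} [Group S] (Q : Subgroup S) (φ : ↥Q →* S) :
    S × S → S × S → Prop :=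
  fun a b => ∃ q : Q, a.1 = b.1 * q ∧ b.2 = φ q * a.2

/-- The `S`-`S`-biset `S ×_{(Q,φ)} S`. -/
def amalgBiset {S : Type} [Group S] (Q : Subgroup S) (φ : ↥Q →* S) : Biset S where
  X := Quot (amalgRel Q φ)
  l s := Quot.map (fun a => (s * a.1, a.2))
    (by rintro a b ⟨q, h1, h2⟩; exact ⟨q, by simp only []; rw [h1, mul_assoc], h2⟩)
  r x t := Quot.map (fun a => (a.1, a.2 * t))
    (by rintro a b ⟨q, h1, h2⟩; exact ⟨q, h1, by simp only []; rw [h2, mul_assoc]⟩) x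
  l_one := by rintro ⟨a⟩; simp [Quot.map]
  l_mul := by rintro s t ⟨a⟩; simp [Quot.map, mul_assoc]
  r_one := by rintro ⟨a⟩; simp [Quot.map]
  r_mul := by rintro ⟨a⟩ s t; simp [Quot.map, mul_assoc]
  lr_comm := by rintro s ⟨a⟩ t; simp [Quot.map]

/-- An injective map of `S`-`S`-bisets from `A` into `B` (a copy of `A` as a subbiset of `B`). -/
def ContainsCopy {S : Type} [Group S] (A B : Biset S) : Prop :=
  ∃ e : A.X → B.X, Function.Injective e ∧
    (∀ s z, e (A.l s z) = B.l s (e z)) ∧ (∀ z t, e (A.r z t) = B.r (e z) t)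

/-- An isomorphism of `S`-`S`-bisets from `A` onto the subset `O` of `B`. -/
def CopyOnto {S : Type} [Group S] (A B : Biset S) (O : Set B.X) : Prop :=
  ∃ e : A.X → B.X, Function.Injective e ∧ Set.range e = O ∧
    (∀ s z, e (A.l s z) = B.l s (e z)) ∧ (∀ z t, e (A.r z t) = B.r (e z) t)

/-- `X` is `F`-generated: every transitive subbiset (i.e. every `S`-`S`-orbit) of `X`
is isomorphic to `S ×_{(Q,φ)} S` for some `Q ≤ S` and `φ ∈ Hom_F(Q, S)`. -/
def FGenerated {S : Type} [Group S] (F : FusionSystem S) (B : Biset S) : Prop :=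
  ∀ x : B.X, ∃ (Q : Subgroup S) (φ : ↥Q →* ↥(⊤ : Subgroup S)), φ ∈ F.Hom Q ⊤ ∧
    CopyOnto (amalgBiset Q ((Subgroup.subtype ⊤).comp φ)) B
      {y | ∃ s t : S, y = B.l s (B.r x t)}

/-- `X` is left `F`-stable: for every `Q ≤ S` and `φ ∈ Hom_F(Q, S)`, the `Q`-`S`-bisets
`_Q X` and `_φ X` are isomorphic. -/
def LeftFStable {S : Type} [Group S] (F : FusionSystem S) (B : Biset S) : Prop :=
  ∀ (Q : Subgroup S) (φ : ↥Q →* ↥(⊤ : Subgroup S)), φ ∈ F.Hom Q ⊤ →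
    ∃ e : B.X ≃ B.X,
      (∀ (q : ↥Q) (x : B.X), e (B.l (q : S) x) = B.l ((φ q : ↥(⊤ : Subgroup S)) : S) (e x)) ∧
      (∀ (x : B.X) (s : S), e (B.r x s) = B.r (e x) s)

/-- A left semicharacteristic biset for `F`: a finite `S`-`S`-biset which is
`F`-generated and left `F`-stable. -/
def IsLeftSemicharacteristic {S : Type} [Group S] (F : FusionSystem S) (B : Biset S) : Prop :=
  Finite B.X ∧ FGenerated F B ∧ LeftFStable F B

/-- The group of automorphisms of `X` as a right `S`-set: all bijections `f : X → X`
with `f (x s) = f x · s`. -/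
def rEquivGroup {S : Type} [Group S] (B : Biset S) : Subgroup (Equiv.Perm B.X) where
  carrier := {f | ∀ x s, f (B.r x s) = B.r (f x) s}
  one_mem' := fun _ _ => rfl
  mul_mem' := by
    intro f g hf hg x s
    simp only [Equiv.Perm.mul_apply, hg x s, hf (g x) s]
  inv_mem' := by
    intro f hf x s
    apply f.injective
    rw [hf, Equiv.Perm.coe_inv, Equiv.apply_symm_apply, Equiv.apply_symm_apply]

/-- The virtual fixed-point count `|X^P|` of a virtual `S`-set given by the formal
sum `Σ_H (c H) · S/H`. -/
noncomputable def fixedCount {S : Type} [Group S] (c : Subgroup S → ℚ) (P : Subgroup S) : ℚ :=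
  ∑ᶠ H : Subgroup S, c H * (Nat.card {x : S ⧸ H // ∀ p ∈ P, p • x = x} : ℚ)

/-- Subgroups `P, Q` of `S` are `S`-conjugate. -/
def SConj {S : Type} [Group S] (P Q : Subgroup S) : Prop :=
  ∃ g : S, Q = Subgroup.map (MulAut.conj g).toMonoidHom P

/-- An isomorphism of `S`-`S`-bisets. -/
def BisetIso {S : Type} [Group S] (A B : Biset S) : Prop :=
  ∃ e : A.X ≃ B.X,
    (∀ s z, e (A.l s z) = B.l s (e z)) ∧ (∀ z t, e (A.r z t) = B.r (e z) t)

/-- Disjoint union of a family of `S`-`S`-bisets. -/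
def sigmaBiset {S : Type} [Group S] {ι : Type} (B : ι → Biset S) : Biset S where
  X := Σ i : ι, (B i).X
  l s x := ⟨x.1, (B x.1).l s x.2⟩
  r x t := ⟨x.1, (B x.1).r x.2 t⟩
  l_one := by rintro ⟨i, x⟩; simp [(B i).l_one]
  l_mul := by rintro s t ⟨i, x⟩; simp [(B i).l_mul]
  r_one := by rintro ⟨i, x⟩; simp [(B i).r_one]
  r_mul := by rintro ⟨i, x⟩ s t; simp [(B i).r_mul]
  lr_comm := by rintro s ⟨i, x⟩ t; simp [(B i).lr_comm]

/-- The biset `S ×_{(S,α)} S` for an endomorphism `α` of `S` (with `Q = S`). -/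
def fullAmalg (S : Type) [Group S] (α : S →* S) : Biset S :=
  amalgBiset ⊤ (α.comp (Subgroup.subtype ⊤))

/-- `Y₀ = ∐ᵢ S ×_{(S,αᵢ)} S` for a family of morphisms `αᵢ ∈ Hom_F(S,S)`. -/
def diagUnion (S : Type) [Group S] {n : ℕ}
    (α : Fin n → (↥(⊤ : Subgroup S) →* ↥(⊤ : Subgroup S))) : Biset S :=
  sigmaBiset (fun i => amalgBiset ⊤ ((Subgroup.subtype ⊤).comp (α i)))

/-! Write `X = X₀ + Σ_K c_K · S/K`. The mark `|(S/K)^P|` vanishes unless `P` is subconjugate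
to `K`, so the table of marks is triangular with positive diagonal. Going down through the orders
`n` of subgroups, choose `c_K ≥ 0` for `K ∈ H` of order `n` so as to raise `|X^P|` on each
`S`-class of order `n` in `H` to the maximum of `|X^·|` over its `F`-class; this leaves the counts
at larger subgroups untouched. Counts outside `H` never change, as `H` is closed under
subconjugation. -/

section Conjugacy

variable {S : Type} [Group S]

theorem conjHom_injective (P Q : Subgroup S) (s : S) (h : ∀ p ∈ P, s * p * s⁻¹ ∈ Q) :
    Function.Injective (conjHom P Q s h) :=
  fun _ _ hab => Subtype.ext (mul_left_cancel (mul_right_cancel (congrArg Subtype.val hab)))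

theorem map_conj_map_conj (a b : S) (P : Subgroup S) :
    (P.map (MulAut.conj b).toMonoidHom).map (MulAut.conj a).toMonoidHom =
      P.map (MulAut.conj (a * b)).toMonoidHom := by
  rw [Subgroup.map_map]
  congr 1
  ext x
  simp [mul_assoc]

theorem map_conj_one (P : Subgroup S) : P.map (MulAut.conj (1 : S)).toMonoidHom = P := by
  ext x
  simp

theorem SConj.refl (P : Subgroup S) : SConj P P := ⟨1, (map_conj_one P).symm⟩

theorem SConj.symm {P Q : Subgroup S} (h : SConj P Q) : SConj Q P := by
  obtain ⟨g, rfl⟩ := h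
  exact ⟨g⁻¹, by rw [map_conj_map_conj, inv_mul_cancel, map_conj_one]⟩

theorem SConj.trans {P Q R : Subgroup S} (h₁ : SConj P Q) (h₂ : SConj Q R) : SConj P R := by
  obtain ⟨g, rfl⟩ := h₁
  obtain ⟨k, rfl⟩ := h₂
  exact ⟨k * g, map_conj_map_conj k g P⟩

theorem SConj.card_eq {P Q : Subgroup S} (h : SConj P Q) : Nat.card Q = Nat.card P := by
  obtain ⟨g, rfl⟩ := h
  exact Subgroup.card_map_of_injective (MulAut.conj g).injective

theorem SConj.fConj (F : FusionSystem S) {P Q : Subgroup S} (h : SConj P Q) : FConj F P Q := by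
  obtain ⟨g, rfl⟩ := h
  have hmem : ∀ p ∈ P, g * p * g⁻¹ ∈ P.map (MulAut.conj g).toMonoidHom :=
    fun p hp => ⟨p, hp, rfl⟩
  refine ⟨conjHom P _ g hmem, F.conj_mem _ _ g hmem, conjHom_injective _ _ g hmem, ?_⟩
  rintro ⟨_, p, hp, rfl⟩
  exact ⟨⟨p, hp⟩, rfl⟩

variable (F : FusionSystem S)

theorem FConj.refl (P : Subgroup S) : FConj F P P := (SConj.refl P).fConj F

theorem FConj.trans {P Q R : Subgroup S} (h₁ : FConj F P Q) (h₂ : FConj F Q R) :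
    FConj F P R := by
  obtain ⟨φ, hφ, bφ⟩ := h₁
  obtain ⟨ψ, hψ, bψ⟩ := h₂
  exact ⟨ψ.comp φ, F.comp_mem hφ hψ, bψ.comp bφ⟩

theorem FConj.symm {P Q : Subgroup S} (h : FConj F P Q) : FConj F Q P := by
  obtain ⟨φ, hφ, bφ⟩ := h
  obtain ⟨ψ, -, χ, hχ, -, hχψ, hψχ⟩ := F.restrict_mem hφ
  have himage : φ.range.map Q.subtype = Q := by
    rw [MonoidHom.range_eq_top.mpr bφ.surjective, ← MonoidHom.range_eq_map,
      Subgroup.range_subtype]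
  have hmem : ∀ q ∈ Q, 1 * q * 1⁻¹ ∈ φ.range.map Q.subtype := by
    simp [himage]
  have bχ : Function.Bijective χ :=
    ⟨fun a b hab => by rw [← hψχ a, hab, hψχ b], fun u => ⟨ψ u, hχψ u⟩⟩
  have bι : Function.Bijective (conjHom Q _ 1 hmem) :=
    ⟨conjHom_injective _ _ 1 hmem,
      fun ⟨y, hy⟩ => ⟨⟨y, himage ▸ hy⟩, by ext; simp [conjHom]⟩⟩
  exact ⟨χ.comp (conjHom Q _ 1 hmem), F.comp_mem (F.conj_mem _ _ 1 hmem) hχ, bχ.comp bι⟩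

theorem FConj.card_eq {P Q : Subgroup S} (h : FConj F P Q) : Nat.card Q = Nat.card P := by
  obtain ⟨φ, -, bφ⟩ := h
  exact (Nat.card_eq_of_bijective φ bφ).symm

end Conjugacy

section Marks

variable {S : Type} [Group S]

noncomputable def mark (P K : Subgroup S) : ℚ :=
  Nat.card {x : S ⧸ K // ∀ p ∈ P, p • x = x}

theorem mark_self_pos [Finite S] (P : Subgroup S) : 0 < mark P P := by
  have hfix : ∀ p ∈ P, p • ((1 : S) : S ⧸ P) = (1 : S) := fun p hp => by
    rw [MulAction.Quotient.smul_coe, QuotientGroup.eq]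
    simpa using hp
  have : Nonempty {x : S ⧸ P // ∀ p ∈ P, p • x = x} := ⟨⟨_, hfix⟩⟩
  exact Nat.cast_pos.mpr Nat.card_pos

theorem exists_map_conj_le_of_mark_ne_zero {P K : Subgroup S} (h : mark P K ≠ 0) :
    ∃ g : S, P.map (MulAut.conj g).toMonoidHom ≤ K := by
  obtain ⟨⟨x, hx⟩⟩ := (Nat.card_ne_zero.mp (Nat.cast_ne_zero.mp h)).1
  obtain ⟨g, rfl⟩ := QuotientGroup.mk_surjective x
  refine ⟨g⁻¹, ?_⟩
  rintro _ ⟨p, hp, rfl⟩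
  have := QuotientGroup.eq.mp (hx p hp)
  simpa [mul_assoc] using K.inv_mem this

theorem mark_map_conj (g : S) (P K : Subgroup S) :
    mark (P.map (MulAut.conj g).toMonoidHom) K = mark P K := by
  unfold mark
  congr 1
  refine Nat.card_congr
    ⟨fun x => ⟨g⁻¹ • x.1, fun p hp => ?_⟩, fun x => ⟨g • x.1, ?_⟩,
      fun x => Subtype.ext (smul_inv_smul g x.1), fun x => Subtype.ext (inv_smul_smul g x.1)⟩
  · calc p • g⁻¹ • x.1 = g⁻¹ • (g * p * g⁻¹) • x.1 := by simp only [smul_smul, mul_assoc,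
          inv_mul_cancel_left]
      _ = g⁻¹ • x.1 := congrArg (g⁻¹ • ·) (x.2 _ ⟨p, hp, rfl⟩)
  · rintro _ ⟨p, hp, rfl⟩
    show (g * p * g⁻¹) • g • x.1 = g • x.1
    rw [smul_smul, inv_mul_cancel_right, mul_smul, x.2 p hp]

theorem mark_eq_zero_of_card_lt [Finite S] {P K : Subgroup S}
    (h : Nat.card K < Nat.card P) : mark P K = 0 := by
  by_contra hne
  obtain ⟨g, hle⟩ := exists_map_conj_le_of_mark_ne_zero hne
  have hcard := Subgroup.card_le_of_le hle
  rw [SConj.card_eq ⟨g, rfl⟩] at hcard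
  omega

theorem SConj.of_mark_ne_zero [Finite S] {P K : Subgroup S}
    (hcard : Nat.card K = Nat.card P) (h : mark P K ≠ 0) : SConj P K := by
  obtain ⟨g, hle⟩ := exists_map_conj_le_of_mark_ne_zero h
  refine ⟨g, (Subgroup.eq_of_le_of_card_ge hle ?_).symm⟩
  rw [SConj.card_eq ⟨g, rfl⟩, hcard]

theorem mark_eq_zero_of_notMem {H : Set (Subgroup S)}
    (hHconj : ∀ P ∈ H, ∀ P', SConj P P' → P' ∈ H) (hHsub : ∀ P ∈ H, ∀ P', P' ≤ P → P' ∈ H)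
    {P K : Subgroup S} (hP : P ∉ H) (hK : K ∈ H) : mark P K = 0 := by
  by_contra hne
  obtain ⟨g, hle⟩ := exists_map_conj_le_of_mark_ne_zero hne
  exact hP (hHconj _ (hHsub K hK _ hle) P (SConj.symm ⟨g, rfl⟩))

end Marks

section FixedCount

variable {S : Type} [Group S] [Fintype S]

theorem fixedCount_eq_sum (c : Subgroup S → ℚ) (P : Subgroup S) :
    fixedCount c P = ∑ K, c K * mark P K :=
  finsum_eq_sum_of_fintype _

theorem fixedCount_add (X Y : Subgroup S → ℚ) (P : Subgroup S) :
    fixedCount (X + Y) P = fixedCount X P + fixedCount Y P := by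
  simp only [fixedCount_eq_sum, Pi.add_apply, add_mul, Finset.sum_add_distrib]

theorem fixedCount_map_conj (c : Subgroup S → ℚ) (g : S) (P : Subgroup S) :
    fixedCount c (P.map (MulAut.conj g).toMonoidHom) = fixedCount c P := by
  simp only [fixedCount_eq_sum, mark_map_conj]

theorem fixedCount_eq_zero_of_mark_eq_zero {Y : Subgroup S → ℚ} {P : Subgroup S}
    (h : ∀ K, Y K ≠ 0 → mark P K = 0) : fixedCount Y P = 0 := by
  rw [fixedCount_eq_sum]
  refine Finset.sum_eq_zero fun K _ => ?_
  by_cases hK : Y K = 0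
  · rw [hK, zero_mul]
  · rw [h K hK, mul_zero]

theorem fixedCount_eq_of_notMem {H : Set (Subgroup S)}
    (hHconj : ∀ P ∈ H, ∀ P', SConj P P' → P' ∈ H) (hHsub : ∀ P ∈ H, ∀ P', P' ≤ P → P' ∈ H)
    {X X' : Subgroup S → ℚ} (hX : ∀ K ∉ H, X K = X' K) {P : Subgroup S} (hP : P ∉ H) :
    fixedCount X P = fixedCount X' P := by
  simp only [fixedCount_eq_sum]
  refine Finset.sum_congr rfl fun K _ => ?_
  by_cases hK : K ∈ H
  · rw [mark_eq_zero_of_notMem hHconj hHsub hP hK, mul_zero, mul_zero]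
  · rw [hX K hK]

end FixedCount

section LevelCorrection

variable {S : Type} [Group S] [Fintype S]

open Classical in
noncomputable def sconjClass (P : Subgroup S) : Finset (Subgroup S) :=
  Finset.univ.filter (SConj P)

theorem mem_sconjClass {P K : Subgroup S} : K ∈ sconjClass P ↔ SConj P K := by
  simp [sconjClass]

theorem sconjClass_eq {P Q : Subgroup S} (h : SConj P Q) : sconjClass Q = sconjClass P := by
  ext K
  simp only [mem_sconjClass]
  exact ⟨h.trans, h.symm.trans⟩

theorem card_sconjClass_pos (P : Subgroup S) : 0 < (sconjClass P).card :=
  Finset.card_pos.mpr ⟨P, mem_sconjClass.mpr (SConj.refl P)⟩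

-- The conjugates of `K` share the defect `g K - |X^K|`: each gets `1 / |sconjClass K|` of it.
noncomputable def levelCorrection (T : Set (Subgroup S)) (X g : Subgroup S → ℚ)
    (K : Subgroup S) : ℚ :=
  open Classical in
  if K ∈ T then (g K - fixedCount X K) / ((sconjClass K).card * mark K K) else 0

variable {T : Set (Subgroup S)} {X g : Subgroup S → ℚ}

theorem levelCorrection_of_notMem {K : Subgroup S} (hK : K ∉ T) :
    levelCorrection T X g K = 0 := by
  simp [levelCorrection, hK]

theorem levelCorrection_nonneg (h : ∀ K ∈ T, fixedCount X K ≤ g K) (K : Subgroup S) :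
    0 ≤ levelCorrection T X g K := by
  by_cases hK : K ∈ T
  · simp only [levelCorrection, hK, if_true]
    exact div_nonneg (sub_nonneg.mpr (h K hK))
      (mul_nonneg (Nat.cast_nonneg _) (mark_self_pos K).le)
  · rw [levelCorrection_of_notMem hK]

theorem fixedCount_levelCorrection {n : ℕ} (hTconj : ∀ P ∈ T, ∀ K, SConj P K → K ∈ T)
    (hTcard : ∀ K ∈ T, Nat.card K = n) (hg : ∀ P K, SConj P K → g K = g P)
    {P : Subgroup S} (hP : P ∈ T) :
    fixedCount (levelCorrection T X g) P = g P - fixedCount X P := by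
  have hclass : ∀ K ∈ sconjClass P, levelCorrection T X g K * mark P K =
      (g P - fixedCount X P) / (sconjClass P).card := by
    intro K hK
    have hPK := mem_sconjClass.mp hK
    obtain ⟨x, hx⟩ := id hPK
    have hfix : fixedCount X K = fixedCount X P := by rw [hx, fixedCount_map_conj]
    have hmark : mark P K = mark K K := by rw [hx, mark_map_conj]
    rw [levelCorrection, if_pos (hTconj P hP K hPK), hg P K hPK, hfix, sconjClass_eq hPK, hmark]
    have := (mark_self_pos K).ne'
    field_simp
  have hrest : ∀ K ∉ sconjClass P, levelCorrection T X g K * mark P K = 0 := by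
    intro K hK
    by_cases hKT : K ∈ T
    · have hcard : Nat.card K = Nat.card P := by rw [hTcard K hKT, hTcard P hP]
      rw [not_imp_comm.mp (SConj.of_mark_ne_zero hcard) (mt mem_sconjClass.mpr hK), mul_zero]
    · rw [levelCorrection_of_notMem hKT, zero_mul]
  rw [fixedCount_eq_sum, ← Finset.sum_subset (Finset.subset_univ _) fun K _ hK => hrest K hK,
    Finset.sum_congr rfl hclass, Finset.sum_const, nsmul_eq_mul]
  have := (card_sconjClass_pos P).ne'
  field_simp

end LevelCorrection

section Stabilization

variable {S : Type} [Group S] [Fintype S] (F : FusionSystem S)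

open Classical in
noncomputable def fconjClass (P : Subgroup S) : Finset (Subgroup S) :=
  Finset.univ.filter (FConj F P)

theorem mem_fconjClass {P Q : Subgroup S} : Q ∈ fconjClass F P ↔ FConj F P Q := by
  simp [fconjClass]

noncomputable def fconjMax (f : Subgroup S → ℚ) (P : Subgroup S) : ℚ :=
  (fconjClass F P).sup' ⟨P, (mem_fconjClass F).mpr (FConj.refl F P)⟩ f

theorem le_fconjMax (f : Subgroup S → ℚ) (P : Subgroup S) : f P ≤ fconjMax F f P :=
  Finset.le_sup' f ((mem_fconjClass F).mpr (FConj.refl F P))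

theorem fconjMax_eq_of_fConj (f : Subgroup S → ℚ) {P Q : Subgroup S} (h : FConj F P Q) :
    fconjMax F f Q = fconjMax F f P := by
  refine Finset.sup'_congr _ (Finset.ext fun R => ?_) fun _ _ => rfl
  simp only [mem_fconjClass]
  exact ⟨(h.trans F ·), (h.symm F).trans F⟩

theorem exists_fixedCount_stable_of_le_card {H : Set (Subgroup S)}
    (hHconj : ∀ P ∈ H, ∀ P', FConj F P P' → P' ∈ H) (X₀ : Subgroup S → ℚ) (n : ℕ) :
    ∃ X : Subgroup S → ℚ, X₀ ≤ X ∧ (∀ K ∉ H, X K = X₀ K) ∧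
      ∀ P ∈ H, ∀ P', FConj F P P' → n ≤ Nat.card P → fixedCount X P = fixedCount X P' := by
  induction n using Nat.strong_decreasing_induction with
  | base =>
    refine ⟨Nat.card S, fun m hm => ⟨X₀, le_rfl, fun _ _ => rfl, fun P _ _ _ hP => ?_⟩⟩
    exact absurd (Subgroup.card_le_card_group P) (by omega)
  | step n ih =>
    obtain ⟨X, hX₀X, hXH, hXstable⟩ := ih (n + 1) n.lt_succ_self
    let T : Set (Subgroup S) := {K | K ∈ H ∧ Nat.card K = n}
    have hTconj : ∀ P ∈ T, ∀ K, SConj P K → K ∈ T := fun P hP K hPK =>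
      ⟨hHconj P hP.1 K (hPK.fConj F), hPK.card_eq.trans hP.2⟩
    have hmax : ∀ P K, SConj P K → fconjMax F (fixedCount X) K = fconjMax F (fixedCount X) P :=
      fun P K hPK => fconjMax_eq_of_fConj F _ (hPK.fConj F)
    let Y := levelCorrection T X (fconjMax F (fixedCount X))
    have hYsupp : ∀ K, Y K ≠ 0 → K ∈ T := fun K hK =>
      by_contra fun hKT => hK (levelCorrection_of_notMem hKT)
    have hY : ∀ P ∈ T, fixedCount (X + Y) P = fconjMax F (fixedCount X) P := fun P hP => by
      rw [fixedCount_add, fixedCount_levelCorrection hTconj (fun K hK => hK.2) hmax hP]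
      ring
    refine ⟨X + Y, fun K => le_add_of_le_of_nonneg (hX₀X K)
      (levelCorrection_nonneg (fun K _ => le_fconjMax F _ K) K), fun K hK => ?_, ?_⟩
    · rw [Pi.add_apply, hXH K hK, add_eq_left]
      exact by_contra fun hYK => hK (hYsupp K hYK).1
    intro P hP P' hPP' hnP
    have hcard : Nat.card P' = Nat.card P := hPP'.card_eq F
    rcases hnP.eq_or_lt with hn | hlt
    · rw [hY P ⟨hP, hn.symm⟩, hY P' ⟨hHconj P hP P' hPP', hcard.trans hn.symm⟩,
        fconjMax_eq_of_fConj F _ hPP']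
    · have hY_above : ∀ Q : Subgroup S, n < Nat.card Q → fixedCount (X + Y) Q = fixedCount X Q :=
        fun Q hQ => by
          rw [fixedCount_add, add_eq_left]
          exact fixedCount_eq_zero_of_mark_eq_zero fun K hK =>
            mark_eq_zero_of_card_lt ((hYsupp K hK).2 ▸ hQ)
      rw [hY_above P hlt, hY_above P' (hcard ▸ hlt)]
      exact hXstable P hP P' hPP' hlt

end Stabilization

theorem exists_stable_virtual_S_set_general
    (S : Type) [Group S] [Fintype S]
    (F : FusionSystem S) (H : Set (Subgroup S))
    (hHconj : ∀ P ∈ H, ∀ P' : Subgroup S, FConj F P P' → P' ∈ H)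
    (hHsub : ∀ P ∈ H, ∀ P' : Subgroup S, P' ≤ P → P' ∈ H)
    (X₀ : Subgroup S → ℚ)
    (hX₀ : ∀ P P' : Subgroup S, P ∉ H → P' ∉ H → FConj F P P' →
      fixedCount X₀ P = fixedCount X₀ P') :
    ∃ X : Subgroup S → ℚ,
      (∀ P P' : Subgroup S, FConj F P P' → fixedCount X P = fixedCount X P') ∧
      (∀ P : Subgroup S, P ∉ H → fixedCount X P = fixedCount X₀ P) ∧
      (∀ K : Subgroup S, X₀ K ≤ X K) := by
  obtain ⟨X, hX₀X, hXH, hstable⟩ := exists_fixedCount_stable_of_le_card F hHconj X₀ 0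
  have hHconj' : ∀ P ∈ H, ∀ P', SConj P P' → P' ∈ H :=
    fun P hP P' h => hHconj P hP P' (h.fConj F)
  have houtside : ∀ P ∉ H, fixedCount X P = fixedCount X₀ P :=
    fun P hP => fixedCount_eq_of_notMem hHconj' hHsub hXH hP
  refine ⟨X, fun P P' h => ?_, houtside, hX₀X⟩
  by_cases hP : P ∈ H
  · exact hstable P hP P' h (Nat.zero_le _)
  · have hP' : P' ∉ H := fun hP' => hP (hHconj P' hP' P (h.symm F))
    rw [houtside P hP, houtside P' hP', hX₀ P P' hP hP' h]

/-- **Lemma (stabilizing an `S`-set).** If `H` is closed under `F`-conjugation and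
subgroups and the virtual `S`-set `X₀` has `F`-stable fixed point counts outside `H`,
then `X₀` can be enlarged by a nonnegative virtual `S`-set to a fully `F`-stable
virtual `S`-set without changing fixed point counts outside `H`. -/
theorem exists_stable_virtual_S_set
    (p : ℕ) [Fact p.Prime] (S : Type) [Group S] [Fintype S] (hS : IsPGroup p S)
    (F : FusionSystem S) (H : Set (Subgroup S))
    (hHconj : ∀ P ∈ H, ∀ P' : Subgroup S, FConj F P P' → P' ∈ H)
    (hHsub : ∀ P ∈ H, ∀ P' : Subgroup S, P' ≤ P → P' ∈ H)
    (X₀ : Subgroup S → ℚ)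
    (hX₀ : ∀ P P' : Subgroup S, P ∉ H → P' ∉ H → FConj F P P' →
      fixedCount X₀ P = fixedCount X₀ P') :
    ∃ X : Subgroup S → ℚ,
      (∀ P P' : Subgroup S, FConj F P P' → fixedCount X P = fixedCount X P') ∧
      (∀ P : Subgroup S, P ∉ H → fixedCount X P = fixedCount X₀ P) ∧
      (∀ K : Subgroup S, X₀ K ≤ X K) :=
  exists_stable_virtual_S_set_general S F H hHconj hHsub X₀ hX₀
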